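/- arXiv:2012.12670 — 2 statements merged into one kernel-verified Lean document; each statement's English description precedes it below -/
import Mathlib

section
/- Let d ∈ ℕ and let μ, ν be regular probability measures on ℝ^d. Suppose that for every test function f ∈ F_d, the product measure μ ⊗ ν assigns probability exactly 1/2 to the set {(θ, ϑ) ∈ ℝ^d × ℝ^d : f(θ) ≤ f(ϑ)} (i.e., for independent random variables θ ~ μ and ϑ ~ ν one has P(f(θ) ≤ f(ϑ)) = 1/2). Then μ = ν. -/
open MeasureTheory Set

/-- The open interval (a,b) in ℝ, with possibly infinite endpoints a, b ∈ EReal. -/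
def erealIoo (a b : EReal) : Set ℝ := {x : ℝ | a < (x : EReal) ∧ (x : EReal) < b}

/-- A measure on ℝ is regular on (a,b) if it is supported in (a,b) and equivalent to
the restriction of Lebesgue measure to (a,b). -/
def regularOn (γ : Measure ℝ) (a b : EReal) : Prop :=
  γ (erealIoo a b)ᶜ = 0 ∧
  γ ≪ volume.restrict (erealIoo a b) ∧
  volume.restrict (erealIoo a b) ≪ γ

/-- A measure on ℝ^d is regular if it is equivalent to Lebesgue measure. -/
def regular {d : ℕ} (ν : Measure (Fin d → ℝ)) : Prop :=
  ν ≪ volume ∧ volume ≪ ν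

/-- The set of test functions F_d: measurable f : ℝ^d → ℝ with range in some open interval
(a,b), such that f_#ν is regular on (a,b) whenever ν is a regular probability measure. -/
def testFun {d : ℕ} (f : (Fin d → ℝ) → ℝ) : Prop :=
  Measurable f ∧
  ∃ a b : EReal, a < b ∧ (∀ x, a < (f x : EReal) ∧ (f x : EReal) < b) ∧
    ∀ ν : Measure (Fin d → ℝ), IsProbabilityMeasure ν → regular ν →
      regularOn (ν.map f) a b

/-!
Fix a measurable set `S` such that neither `S` nor `Sᶜ` is Lebesgue-null. Through a Borel
embedding into `ℝ` followed by the (continuous) distribution function, Lebesgue measure on `S`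
and on `Sᶜ` can each be pushed to a measure equivalent to Lebesgue measure on `(0, 1)`, by maps
`g₁` and `g₀`. Then `f = 1 + g₁` on `S`, `g₀` off `S`, and `f' = 1 + g₀` on `Sᶜ`, `g₁` on `S`, are
test functions. The events `f θ ≤ f ϑ` and `f' θ ≤ f' ϑ` have the same part where `θ, ϑ` lie on the
same side of `S`, and cross parts of probability `μ Sᶜ * ν S` and `μ S * ν Sᶜ`; equating the two
probabilities `1/2` gives `μ Sᶜ * ν S = μ S * ν Sᶜ`, that is `μ S = ν S`.
-/

open ProbabilityTheory
open scoped ENNReal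

lemma continuous_cdf (p : Measure ℝ) [IsProbabilityMeasure p] [NullSingletonClass p] :
    Continuous (cdf p) := by
  refine continuous_iff_continuousAt.2 fun x => ?_
  rw [(monotone_cdf p).continuousAt_iff_leftLim_eq_rightLim, StieltjesFunction.rightLim_eq]
  have hjump := (cdf p).measure_singleton x
  rw [measure_cdf, measure_singleton, eq_comm, ENNReal.ofReal_eq_zero] at hjump
  linarith [(monotone_cdf p).leftLim_le (le_refl x)]

lemma Monotone.exists_preimage_Iic_eq_Iic {F : ℝ → ℝ} (hmono : Monotone F) (hF : Continuous F)
    {a b t : ℝ} (ha : F a ≤ t) (hb : t < F b) : ∃ s, F s = t ∧ F ⁻¹' Iic t = Iic s := by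
  have hb_upper : b ∈ upperBounds (F ⁻¹' Iic t) := fun x hx =>
    le_of_not_gt fun hbx => hb.not_ge ((hmono hbx.le).trans hx)
  have hbdd : BddAbove (F ⁻¹' Iic t) := ⟨b, hb_upper⟩
  have hs : sSup (F ⁻¹' Iic t) ∈ F ⁻¹' Iic t :=
    (isClosed_Iic.preimage hF).csSup_mem ⟨a, ha⟩ hbdd
  have hsb : sSup (F ⁻¹' Iic t) ≤ b := csSup_le ⟨a, ha⟩ hb_upper
  obtain ⟨c, hc, hFc⟩ := intermediate_value_Icc hsb hF.continuousOn ⟨hs, hb.le⟩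
  have hcs : c = sSup (F ⁻¹' Iic t) :=
    le_antisymm (le_csSup hbdd (show F c ≤ t from hFc.le)) hc.1
  refine ⟨_, hcs ▸ hFc, Subset.antisymm (fun x hx => le_csSup hbdd hx) fun x hx => ?_⟩
  exact (hmono hx).trans hs

lemma map_cdf_eq_restrict_Ioc (p : Measure ℝ) [IsProbabilityMeasure p] [NullSingletonClass p] :
    p.map (cdf p) = volume.restrict (Ioc 0 1) := by
  have : IsProbabilityMeasure (volume.restrict (Ioc (0 : ℝ) 1)) := ⟨by simp⟩
  refine Measure.ext_of_Iic _ _ fun t => ?_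
  rw [Measure.map_apply (monotone_cdf p).measurable measurableSet_Iic,
    Measure.restrict_apply measurableSet_Iic]
  rcases le_or_gt 1 t with ht1 | ht1
  · have hpre : cdf p ⁻¹' Iic t = univ := eq_univ_of_forall fun x => (cdf_le_one p x).trans ht1
    rw [hpre, inter_eq_right.2 fun x hx => hx.2.trans ht1]
    simp
  rw [Iic_inter_Ioc_of_le ht1.le, Real.volume_Ioc, sub_zero]
  rcases (cdf p ⁻¹' Iic t).eq_empty_or_nonempty with hempty | ⟨a, ha⟩
  · have ht0 : t ≤ 0 := le_of_not_gt fun ht0 =>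
      ((tendsto_cdf_atBot p).eventually_lt_const ht0).exists.elim fun x hx =>
        hempty.subset (show cdf p x ≤ t from hx.le)
    simp [hempty, ht0]
  obtain ⟨b, hb⟩ := ((tendsto_cdf_atTop p).eventually_const_lt ht1).exists
  obtain ⟨s, hst, hpre⟩ := (monotone_cdf p).exists_preimage_Iic_eq_Iic (continuous_cdf p) ha hb
  rw [hpre, ← ofReal_cdf, hst]

structure SpreadsOverUnitInterval {α : Type*} [MeasurableSpace α] (m : Measure α) (g : α → ℝ) :
    Prop where
  measurable : Measurable g
  mem_Ioo : ∀ x, g x ∈ Ioo (0 : ℝ) 1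
  map_absolutelyContinuous : m.map g ≪ volume.restrict (Ioo 0 1)
  absolutelyContinuous_map : volume.restrict (Ioo 0 1) ≪ m.map g

lemma exists_spreadsOverUnitInterval {α : Type*} [MeasurableSpace α] [StandardBorelSpace α]
    (m : Measure α) [SFinite m] [NullSingletonClass m] (hm : m ≠ 0) :
    ∃ g, SpreadsOverUnitInterval m g := by
  have : NeZero m := ⟨hm⟩
  set p := m.toFinite
  set e := embeddingReal α
  have he := measurableEmbedding_embeddingReal α
  set q := p.map e
  have : IsProbabilityMeasure q := Measure.isProbabilityMeasure_map he.measurable.aemeasurable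
  have : NullSingletonClass q := ⟨fun y => by
    rw [he.map_apply, toFinite_apply_eq_zero_iff]
    exact ((subsingleton_singleton.preimage he.injective).countable).measure_zero m⟩
  set G := cdf q ∘ e
  have hG : Measurable G := (monotone_cdf q).measurable.comp he.measurable
  have hpG : p.map G = volume.restrict (Ioo 0 1) := by
    rw [← Measure.map_map (monotone_cdf q).measurable he.measurable, map_cdf_eq_restrict_Ioc,
      Measure.restrict_congr_set Ioo_ae_eq_Ioc]
  have hG_mem : ∀ᵐ x ∂p, G x ∈ Ioo (0 : ℝ) 1 :=
    ae_of_ae_map hG.aemeasurable (hpG ▸ ae_restrict_mem measurableSet_Ioo)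
  -- `G` only misses `(0, 1)` on a `p`-null set; redefine it there.
  set g := fun x => if G x ∈ Ioo (0 : ℝ) 1 then G x else 1 / 2
  have hg : Measurable g := Measurable.ite (hG measurableSet_Ioo) hG measurable_const
  have hpg : p.map g = volume.restrict (Ioo 0 1) := by
    rw [← hpG]
    exact Measure.map_congr (hG_mem.mono fun x hx => if_pos hx)
  refine ⟨g, hg, fun x => ?_, ?_, ?_⟩
  · dsimp only [g]
    split_ifs with hx
    exacts [hx, ⟨by norm_num, by norm_num⟩]
  · exact hpg ▸ (absolutelyContinuous_toFinite m).map hg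
  · exact hpg ▸ (toFinite_absolutelyContinuous m).map hg

lemma map_const_add_restrict_Ioo (c a b : ℝ) :
    (volume.restrict (Ioo a b)).map (c + ·) = volume.restrict (Ioo (c + a) (c + b)) := by
  have hpre : Ioo a b = (c + ·) ⁻¹' Ioo (c + a) (c + b) := by simp
  rw [hpre, ← Measure.restrict_map (measurable_const_add c) measurableSet_Ioo,
    map_add_left_eq_self]

lemma SpreadsOverUnitInterval.map_one_add {α : Type*} [MeasurableSpace α] {m : Measure α}
    {g : α → ℝ} (hg : SpreadsOverUnitInterval m g) :
    m.map (1 + g) ≪ volume.restrict (Ioo 1 2) ∧ volume.restrict (Ioo 1 2) ≪ m.map (1 + g) := by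
  have hmap : m.map (1 + g) = (m.map g).map (1 + ·) :=
    (Measure.map_map (measurable_const_add 1) hg.measurable).symm
  have hIoo : (volume.restrict (Ioo (0 : ℝ) 1)).map (1 + ·) = volume.restrict (Ioo 1 2) := by
    rw [map_const_add_restrict_Ioo]
    norm_num
  rw [hmap, ← hIoo]
  exact ⟨hg.map_absolutelyContinuous.map (measurable_const_add 1),
    hg.absolutelyContinuous_map.map (measurable_const_add 1)⟩

lemma restrict_Ioo_le_add_restrict_Ioo {a b c : ℝ} (hab : a ≤ b) (hbc : b < c) :
    volume.restrict (Ioo a c) ≤ volume.restrict (Ioo a b) + volume.restrict (Ioo b c) := by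
  rw [← Ioc_union_Ioo_eq_Ioo hab hbc, Measure.restrict_congr_set (Ioo_ae_eq_Ioc (a := a) (b := b))]
  exact Measure.restrict_union_le _ _

lemma Measure.map_piecewise {α β : Type*} [MeasurableSpace α] [MeasurableSpace β]
    (μ : Measure α) {S : Set α} [DecidablePred (· ∈ S)] (hS : MeasurableSet S) {f₁ f₀ : α → β}
    (hf₁ : Measurable f₁) (hf₀ : Measurable f₀) :
    μ.map (S.piecewise f₁ f₀) = (μ.restrict S).map f₁ + (μ.restrict Sᶜ).map f₀ := by
  conv_lhs => rw [← Measure.restrict_add_restrict_compl (μ := μ) hS]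
  rw [Measure.map_add _ _ (hf₁.piecewise hS hf₀), Measure.map_congr (piecewise_ae_eq_restrict hS),
    Measure.map_congr (piecewise_ae_eq_restrict_compl hS)]

lemma erealIoo_coe_coe (a b : ℝ) : erealIoo a b = Ioo a b := by
  ext x
  simp [erealIoo]

lemma regularOn_map {d : ℕ} {ρ : Measure (Fin d → ℝ)} (hρ : regular ρ)
    {f : (Fin d → ℝ) → ℝ} (hf : Measurable f) {a b : ℝ}
    (h₁ : volume.map f ≪ volume.restrict (Ioo a b))
    (h₂ : volume.restrict (Ioo a b) ≪ volume.map f) :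
    regularOn (ρ.map f) a b := by
  have hac : ρ.map f ≪ volume.restrict (Ioo a b) := (hρ.1.map hf).trans h₁
  rw [regularOn, erealIoo_coe_coe]
  refine ⟨hac ?_, hac, h₂.trans (hρ.2.map hf)⟩
  rw [Measure.restrict_apply measurableSet_Ioo.compl, compl_inter_self, measure_empty]

lemma testFun_piecewise {d : ℕ} {S : Set (Fin d → ℝ)} [DecidablePred (· ∈ S)]
    (hS : MeasurableSet S) {g₁ g₀ : (Fin d → ℝ) → ℝ}
    (hg₁ : SpreadsOverUnitInterval (volume.restrict S) g₁)
    (hg₀ : SpreadsOverUnitInterval (volume.restrict Sᶜ) g₀) :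
    testFun (S.piecewise (1 + g₁) g₀) := by
  set f := S.piecewise (1 + g₁) g₀
  have hf₁ : Measurable (1 + g₁) := measurable_const.add hg₁.measurable
  have hf : Measurable f := hf₁.piecewise hS hg₀.measurable
  have hmem : ∀ x, (0 : ℝ) < f x ∧ f x < 2 := fun x => by
    have := hg₁.mem_Ioo x
    have := hg₀.mem_Ioo x
    by_cases hx : x ∈ S <;> simp only [f, hx, piecewise_eq_of_mem, piecewise_eq_of_notMem,
      not_false_eq_true, Pi.add_apply, Pi.one_apply, mem_Ioo] at * <;> constructor <;> linarith
  have hmap := Measure.map_piecewise volume hS hf₁ hg₀.measurable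
  have hsub : ∀ {a b : ℝ}, 0 ≤ a → b ≤ 2 →
      volume.restrict (Ioo a b) ≪ volume.restrict (Ioo 0 2) := fun ha hb =>
    Measure.absolutelyContinuous_of_le (Measure.restrict_mono (Ioo_subset_Ioo ha hb) le_rfl)
  refine ⟨hf, (0 : ℝ), (2 : ℝ), EReal.coe_lt_coe_iff.2 two_pos,
    fun x => ⟨EReal.coe_lt_coe_iff.2 (hmem x).1, EReal.coe_lt_coe_iff.2 (hmem x).2⟩,
    fun ρ _ hρ => regularOn_map hρ hf ?_ ?_⟩ <;> rw [hmap]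
  · exact (hg₁.map_one_add.1.trans (hsub zero_le_one le_rfl)).add_left
      (hg₀.map_absolutelyContinuous.trans (hsub le_rfl one_le_two))
  · refine (restrict_Ioo_le_add_restrict_Ioo zero_le_one one_lt_two).absolutelyContinuous.trans ?_
    rw [add_comm]
    exact hg₁.map_one_add.2.add hg₀.absolutelyContinuous_map

lemma setOf_piecewise_le_eq {α : Type*} {S : Set α} [DecidablePred (· ∈ S)] {f₁ f₀ : α → ℝ}
    (hlt : ∀ x y, f₀ x < f₁ y) :
    {p : α × α | S.piecewise f₁ f₀ p.1 ≤ S.piecewise f₁ f₀ p.2} =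
      Sᶜ ×ˢ S ∪ (S ×ˢ S ∩ {p | f₁ p.1 ≤ f₁ p.2}) ∪ (Sᶜ ×ˢ Sᶜ ∩ {p | f₀ p.1 ≤ f₀ p.2}) := by
  ext ⟨x, y⟩
  by_cases hx : x ∈ S <;> by_cases hy : y ∈ S <;>
    simp [hx, hy, (hlt _ _).le, (hlt _ _).not_ge]

lemma measure_prod_setOf_piecewise_le {α : Type*} [MeasurableSpace α] (μ ν : Measure α)
    [SFinite ν] {S : Set α} [DecidablePred (· ∈ S)] (hS : MeasurableSet S) {f₁ f₀ : α → ℝ}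
    (hf₁ : Measurable f₁) (hf₀ : Measurable f₀) (hlt : ∀ x y, f₀ x < f₁ y) :
    (μ.prod ν) {p : α × α | S.piecewise f₁ f₀ p.1 ≤ S.piecewise f₁ f₀ p.2} =
      μ Sᶜ * ν S + (μ.prod ν) (S ×ˢ S ∩ {p | f₁ p.1 ≤ f₁ p.2}) +
        (μ.prod ν) (Sᶜ ×ˢ Sᶜ ∩ {p | f₀ p.1 ≤ f₀ p.2}) := by
  have hle : ∀ {f : α → ℝ}, Measurable f → MeasurableSet {p : α × α | f p.1 ≤ f p.2} :=
    fun hf => measurableSet_le (hf.comp measurable_fst) (hf.comp measurable_snd)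
  rw [setOf_piecewise_le_eq hlt, measure_union _ ((hS.compl.prod hS.compl).inter (hle hf₀)),
    measure_union _ ((hS.prod hS).inter (hle hf₁)), Measure.prod_prod]
  all_goals
    rw [Set.disjoint_left]
    rintro ⟨x, y⟩
    simp only [mem_union, mem_inter_iff, mem_prod, mem_compl_iff, mem_ofPred_eq]
    tauto

lemma measure_prod_setOf_piecewise_one_add_le {α : Type*} [MeasurableSpace α]
    (μ ν : Measure α) [SFinite ν] {S : Set α} [DecidablePred (· ∈ S)] (hS : MeasurableSet S)
    {g₁ g₀ : α → ℝ} (hg₁ : Measurable g₁) (hg₀ : Measurable g₀) (hg₁_nonneg : ∀ x, 0 ≤ g₁ x)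
    (hg₀_lt : ∀ x, g₀ x < 1) :
    (μ.prod ν) {p : α × α | S.piecewise (1 + g₁) g₀ p.1 ≤ S.piecewise (1 + g₁) g₀ p.2} =
      μ Sᶜ * ν S + (μ.prod ν) (S ×ˢ S ∩ {p | g₁ p.1 ≤ g₁ p.2}) +
        (μ.prod ν) (Sᶜ ×ˢ Sᶜ ∩ {p | g₀ p.1 ≤ g₀ p.2}) := by
  have hlt : ∀ x y, g₀ x < (1 + g₁) y := fun x y => by
    simp only [Pi.add_apply, Pi.one_apply]
    linarith [hg₀_lt x, hg₁_nonneg y]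
  rw [measure_prod_setOf_piecewise_le μ ν hS (f₁ := 1 + g₁) (measurable_const.add hg₁) hg₀ hlt]
  simp only [Pi.add_apply, Pi.one_apply, add_le_add_iff_left]

lemma measure_compl_mul_eq_of_forall_testFun {d : ℕ} {μ ν : Measure (Fin d → ℝ)}
    [IsFiniteMeasure μ] [IsFiniteMeasure ν] {c : ℝ≥0∞}
    (h : ∀ f : (Fin d → ℝ) → ℝ, testFun f →
      (μ.prod ν) {p : (Fin d → ℝ) × (Fin d → ℝ) | f p.1 ≤ f p.2} = c)
    {S : Set (Fin d → ℝ)} (hS : MeasurableSet S) (h0 : volume S ≠ 0) (h1 : volume Sᶜ ≠ 0) :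
    μ Sᶜ * ν S = μ S * ν Sᶜ := by
  classical
  -- Without it, `volume` on `Fin d → ℝ` would be a Dirac mass.
  have : Nonempty (Fin d) := by
    obtain ⟨x, hx⟩ := nonempty_of_measure_ne_zero h0
    obtain ⟨y, hy⟩ := nonempty_of_measure_ne_zero h1
    obtain ⟨i, -⟩ := Function.ne_iff.1 (ne_of_mem_of_not_mem hx hy)
    exact ⟨i⟩
  obtain ⟨g₁, hg₁⟩ := exists_spreadsOverUnitInterval _ (Measure.restrict_eq_zero.not.2 h0)
  obtain ⟨g₀, hg₀⟩ := exists_spreadsOverUnitInterval _ (Measure.restrict_eq_zero.not.2 h1)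
  have e₁ := h _ (testFun_piecewise hS hg₁ hg₀)
  have e₂ := h _ (testFun_piecewise hS.compl hg₀ (by rwa [compl_compl]))
  rw [measure_prod_setOf_piecewise_one_add_le μ ν hS hg₁.measurable hg₀.measurable
    (fun x => (hg₁.mem_Ioo x).1.le) fun x => (hg₀.mem_Ioo x).2] at e₁
  rw [measure_prod_setOf_piecewise_one_add_le μ ν hS.compl hg₀.measurable hg₁.measurable
    (fun x => (hg₀.mem_Ioo x).1.le) fun x => (hg₁.mem_Ioo x).2, compl_compl] at e₂
  have hsum := e₁.trans e₂.symm
  rw [add_assoc, add_assoc, add_comm ((μ.prod ν) (S ×ˢ S ∩ _))] at hsum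
  exact (ENNReal.add_left_inj (by finiteness)).1 hsum

lemma measure_eq_of_measure_compl_mul_eq {α : Type*} [MeasurableSpace α] {μ ν : Measure α}
    [IsProbabilityMeasure μ] [IsProbabilityMeasure ν] {S : Set α} (hS : MeasurableSet S)
    (h : μ Sᶜ * ν S = μ S * ν Sᶜ) : μ S = ν S := by
  have hreal : μ.real Sᶜ * ν.real S = μ.real S * ν.real Sᶜ := by
    simpa only [measureReal_def, ENNReal.toReal_mul] using congrArg ENNReal.toReal h
  rw [probReal_compl_eq_one_sub hS, probReal_compl_eq_one_sub hS] at hreal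
  rw [← ofReal_measureReal, ← ofReal_measureReal]
  congr 1
  linarith

/-- If μ, ν are regular probability measures on ℝ^d and, for independent θ ~ μ, ϑ ~ ν,
we have P(f(θ) ≤ f(ϑ)) = 1/2 for every test function f ∈ F_d, then μ = ν. -/
theorem stmt_6 {d : ℕ} (μ ν : Measure (Fin d → ℝ))
    [IsProbabilityMeasure μ] [IsProbabilityMeasure ν]
    (hμ : regular μ) (hν : regular ν)
    (h : ∀ f : (Fin d → ℝ) → ℝ, testFun f →
      (μ.prod ν) {p : (Fin d → ℝ) × (Fin d → ℝ) | f p.1 ≤ f p.2} = 1/2) :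
    μ = ν := by
  ext S hS
  by_cases h0 : volume S = 0
  · rw [hμ.1 h0, hν.1 h0]
  by_cases h1 : volume Sᶜ = 0
  · rw [(prob_compl_eq_zero_iff hS).1 (hμ.1 h1), (prob_compl_eq_zero_iff hS).1 (hν.1 h1)]
  exact measure_eq_of_measure_compl_mul_eq hS (measure_compl_mul_eq_of_forall_testFun h hS h0 h1)
end

section
/- (The 'mirror Bayes' learning procedure is not strongly calibrated.) Let Φ denote the CDF of the standard Gaussian N(0,1), and let ρ be the joint law of (θ, y) where θ ~ N(0,1) and y | θ ~ N(θ, 1). The CDF of the mirror-Bayes output N(−y/2, 1/2) evaluated at θ is Φ(√2 (θ + y/2)). Then the pushforward of ρ under the map (θ, y) ↦ Φ(√2 (θ + y/2)) is NOT the uniform distribution on (0,1). -/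
/-!
Writing y = θ + ε with θ, ε independent standard Gaussians, the argument
√2 (θ + y/2) = (3θ + ε)/√2 of Φ is N(0, 5). So the pushed-forward law is that of Φ(Z) with
Z ~ N(0, 5), which gives the event {Φ(Z) ≤ Φ(√5)} = {Z ≤ √5} probability Φ(1), whereas the uniform
law gives it probability Φ(√5) > Φ(1).
-/

open MeasureTheory ProbabilityTheory Set
open scoped NNReal ENNReal

/-- The uniform probability distribution on the open interval (0,1). -/
noncomputable def unif01 : Measure ℝ := volume.restrict (Ioo (0:ℝ) 1)

/-- The CDF Φ of the standard Gaussian N(0,1). -/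
noncomputable def stdGaussCDF (x : ℝ) : ℝ := ((gaussianReal 0 1) (Iic x)).toReal

/-- The joint law of (θ, y) where θ ~ N(0,1) and y | θ ~ N(θ, 1). -/
noncomputable def jointLaw : Measure (ℝ × ℝ) :=
  (gaussianReal 0 1).bind (fun θ : ℝ => (gaussianReal θ 1).map (fun y : ℝ => (θ, y)))

namespace MeasureTheory.Measure

variable {α β γ : Type*} [MeasurableSpace α] [MeasurableSpace β] [MeasurableSpace γ]

lemma map_bind {μ : Measure α} {κ : α → Measure β} {f : β → γ} (hκ : Measurable κ)
    (hf : Measurable f) : (μ.bind κ).map f = μ.bind fun a ↦ (κ a).map f := by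
  ext s hs
  have hκf : Measurable fun a ↦ (κ a).map f := (measurable_map f hf).comp hκ
  rw [map_apply hf hs, bind_apply (hf hs) hκ.aemeasurable, bind_apply hs hκf.aemeasurable]
  simp_rw [map_apply hf hs]

lemma bind_map_prodMk_eq_map_prod (μ : Measure α) (ν : Measure β) [SFinite ν]
    {f : α × β → γ} (hf : Measurable f) :
    μ.bind (fun a ↦ ν.map fun b ↦ (a, f (a, b))) = (μ.prod ν).map fun p ↦ (p.1, f p) := by
  have hg : Measurable fun p : α × β ↦ (p.1, f p) := measurable_fst.prodMk hf
  rw [prod_def, map_bind Measurable.map_prodMk_left hg]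
  congr 1 with a : 1
  rw [map_map hg measurable_prodMk_left]
  rfl

end MeasureTheory.Measure

namespace ProbabilityTheory

lemma gaussianReal_prod_map_linear (m₁ m₂ a b : ℝ) (v₁ v₂ : ℝ≥0) :
    ((gaussianReal m₁ v₁).prod (gaussianReal m₂ v₂)).map (fun p ↦ a * p.1 + b * p.2)
      = gaussianReal (a * m₁ + b * m₂)
          (.mk (a ^ 2) (sq_nonneg a) * v₁ + .mk (b ^ 2) (sq_nonneg b) * v₂) := by
  have hscale : Measurable (Prod.map (a * ·) (b * ·) : ℝ × ℝ → ℝ × ℝ) := by fun_prop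
  have hsum : Measurable fun p : ℝ × ℝ ↦ p.1 + p.2 := by fun_prop
  have hsplit : (fun p : ℝ × ℝ ↦ a * p.1 + b * p.2)
      = (fun p ↦ p.1 + p.2) ∘ Prod.map (a * ·) (b * ·) := rfl
  rw [hsplit, ← Measure.map_map hsum hscale, ← Measure.map_prod_map _ _ (by fun_prop) (by fun_prop),
    ← Measure.conv, gaussianReal_map_const_mul, gaussianReal_map_const_mul,
    gaussianReal_conv_gaussianReal]

end ProbabilityTheory

lemma jointLaw_eq_map_prod :
    jointLaw = ((gaussianReal 0 1).prod (gaussianReal 0 1)).map fun p ↦ (p.1, p.1 + p.2) := by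
  rw [jointLaw, ← Measure.bind_map_prodMk_eq_map_prod _ _ (by fun_prop)]
  congr 1 with θ : 1
  have hshift : (gaussianReal 0 1).map (θ + ·) = gaussianReal θ 1 := by
    simpa using gaussianReal_map_const_add (μ := 0) (v := 1) θ
  rw [← hshift, Measure.map_map (by fun_prop) (by fun_prop)]
  rfl

lemma map_jointLaw_eq_gaussianReal :
    jointLaw.map (fun p ↦ √2 * (p.1 + p.2 / 2)) = gaussianReal 0 5 := by
  have h2 : √2 ^ 2 = (2 : ℝ) := Real.sq_sqrt zero_le_two
  rw [jointLaw_eq_map_prod, Measure.map_map (by fun_prop) (by fun_prop)]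
  convert gaussianReal_prod_map_linear 0 0 (3 * √2 / 2) (√2 / 2) 1 1 using 2
  · ext p
    simp only [Function.comp_apply]
    ring
  · ring
  · ext
    simp only [NNReal.coe_ofNat, NNReal.coe_add, NNReal.coe_mul, NNReal.coe_mk, NNReal.coe_one]
    nlinarith [h2]

lemma stdGaussCDF_strictMono : StrictMono stdGaussCDF := by
  intro a b hab
  have hpos : gaussianReal 0 1 (Ioc a b) ≠ 0 := fun h ↦
    hab.not_ge <| by simpa using gaussianReal_absolutelyContinuous' 0 one_ne_zero h
  have hlt : gaussianReal 0 1 (Iic a) < gaussianReal 0 1 (Iic b) := by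
    rw [← Iic_union_Ioc_eq_Iic hab.le, measure_union (Iic_disjoint_Ioc le_rfl) measurableSet_Ioc]
    exact ENNReal.lt_add_right (measure_ne_top _ _) hpos
  exact (ENNReal.toReal_lt_toReal (measure_ne_top _ _) (measure_ne_top _ _)).mpr hlt

lemma stdGaussCDF_lt_one (x : ℝ) : stdGaussCDF x < 1 :=
  (stdGaussCDF_strictMono (lt_add_one x)).trans_le <| ENNReal.toReal_le_of_le_ofReal zero_le_one
    (by simpa using prob_le_one)

lemma unif01_Iic {t : ℝ} (ht : t < 1) : unif01 (Iic t) = ENNReal.ofReal t := by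
  have hset : Iic t ∩ Ioo 0 1 = Ioc 0 t := by
    ext z
    simp only [mem_inter_iff, mem_Iic, mem_Ioo, mem_Ioc]
    constructor
    · rintro ⟨hzt, hz0, -⟩
      exact ⟨hz0, hzt⟩
    · rintro ⟨hz0, hzt⟩
      exact ⟨hzt, hz0, hzt.trans_lt ht⟩
  rw [unif01, Measure.restrict_apply measurableSet_Iic, hset, Real.volume_Ioc, sub_zero]

lemma gaussianReal_Iic_eq_ofReal_stdGaussCDF {v : ℝ≥0} (hv : v ≠ 0) (x : ℝ) :
    gaussianReal 0 v (Iic x) = ENNReal.ofReal (stdGaussCDF (x / √v)) := by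
  have hσ : 0 < √(v : ℝ) := Real.sqrt_pos.mpr (by positivity)
  have hscale : gaussianReal 0 v = (gaussianReal 0 1).map (√v * ·) := by
    rw [gaussianReal_map_const_mul]
    congr 1
    · ring
    · ext; simp [Real.sq_sqrt v.coe_nonneg]
  have hpre : (√v * ·) ⁻¹' Iic x = Iic (x / √v) := by
    ext z
    simp [le_div_iff₀ hσ, mul_comm]
  rw [hscale, Measure.map_apply (measurable_const_mul _) measurableSet_Iic, hpre, stdGaussCDF,
    ENNReal.ofReal_toReal (measure_ne_top _ _)]

lemma map_stdGaussCDF_gaussianReal_ne_unif01 {v : ℝ≥0} (hv₀ : v ≠ 0) (hv₁ : v ≠ 1) :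
    (gaussianReal 0 v).map stdGaussCDF ≠ unif01 := by
  intro h
  have hσ : 0 < √(v : ℝ) := Real.sqrt_pos.mpr (by positivity)
  have hpre : stdGaussCDF ⁻¹' Iic (stdGaussCDF √v) = Iic √v := by
    ext z
    exact stdGaussCDF_strictMono.le_iff_le
  have hmeas := congrArg (· (Iic (stdGaussCDF √v))) h
  simp only [Measure.map_apply stdGaussCDF_strictMono.monotone.measurable measurableSet_Iic, hpre,
    gaussianReal_Iic_eq_ofReal_stdGaussCDF hv₀, div_self hσ.ne',
    unif01_Iic (stdGaussCDF_lt_one _)] at hmeas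
  have h1 : 1 = √(v : ℝ) := stdGaussCDF_strictMono.injective <|
    (ENNReal.ofReal_eq_ofReal_iff ENNReal.toReal_nonneg ENNReal.toReal_nonneg).mp hmeas
  exact hv₁ (by exact_mod_cast Real.sqrt_eq_one.mp h1.symm)

/-- The 'mirror Bayes' learning procedure is not strongly calibrated: the pushforward of
the joint law of (θ, y) under (θ, y) ↦ Φ(√2 (θ + y/2)), the CDF of N(−y/2, 1/2)
evaluated at θ, is not the uniform distribution on (0,1). -/
theorem stmt_13 :
    jointLaw.map
      (fun p : ℝ × ℝ => stdGaussCDF (Real.sqrt 2 * (p.1 + p.2 / 2))) ≠ unif01 := by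
  have hq : Measurable fun p : ℝ × ℝ ↦ √2 * (p.1 + p.2 / 2) := by fun_prop
  rw [show (fun p : ℝ × ℝ ↦ stdGaussCDF (√2 * (p.1 + p.2 / 2)))
      = stdGaussCDF ∘ fun p ↦ √2 * (p.1 + p.2 / 2) from rfl,
    ← Measure.map_map stdGaussCDF_strictMono.monotone.measurable hq, map_jointLaw_eq_gaussianReal]
  exact map_stdGaussCDF_gaussianReal_ne_unif01 (by norm_num) (by norm_num)
end
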